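/- Let α ∈ (0,1] and β > 0 with β ≤ 2/(1+α). Then (0,0) is the unique maximizer of the free energy functional G_{α,β} on [−1,1]²: G_{α,β}(m) < G_{α,β}(0,0) for every m ∈ [−1,1]² with m ≠ (0,0). -/

import Mathlib

open Filter

noncomputable section

/-- `E_α(m)`. -/
def Ebil (a : ℝ) (m : ℝ × ℝ) : ℝ := (m.1 ^ 2 + m.2 ^ 2) / 4 + (a / 2) * m.1 * m.2

/-- One-dimensional entropy term. -/
def entI (x : ℝ) : ℝ :=
  ((1 + x) / 2) * Real.log ((1 + x) / 2) + ((1 - x) / 2) * Real.log ((1 - x) / 2)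

/-- Free energy functional `G_{α,β}`. -/
def Gfun (a β : ℝ) (m : ℝ × ℝ) : ℝ := β * Ebil a m - (entI m.1 + entI m.2)

/-- Inverse hyperbolic tangent. -/
def arctanh (x : ℝ) : ℝ := (1 / 2) * Real.log ((1 + x) / (1 - x))

/-- The Hessian matrix of `G_{α,β}` at `m`. -/
def hessG (a β : ℝ) (m : ℝ × ℝ) : Matrix (Fin 2) (Fin 2) ℝ :=
  !![β / 2 - 1 / (1 - m.1 ^ 2), β * a / 2; β * a / 2, β / 2 - 1 / (1 - m.2 ^ 2)]

/-- The square `[−1,1]²`. -/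
def box : Set (ℝ × ℝ) := Set.Icc (-1 : ℝ) 1 ×ˢ Set.Icc (-1 : ℝ) 1

/-!
Since `0 ≤ α` and `β (1 + α) ≤ 2`, the energy satisfies `β E_α(m) ≤ (m₁² + m₂²)/2`. On the other
hand `I(x) + log 2`, the relative entropy of the Bernoulli law `(1 + x)/2` with respect to the fair
coin, strictly exceeds `x²/2` for `x ≠ 0` (a case of Pinsker's inequality): its derivative
`arctanh x` exceeds the derivative `x` of `x²/2` on `(0, 1)`. Adding the two coordinates gives
`G_{α,β}(m) < 2 log 2 = G_{α,β}(0, 0)`.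
-/

lemma entI_neg (x : ℝ) : entI (-x) = entI x := by
  simp only [entI, sub_neg_eq_add, ← sub_eq_add_neg]
  ring

lemma entI_abs (x : ℝ) : entI |x| = entI x := by
  rcases abs_choice x with h | h <;> simp [h, entI_neg]

lemma entI_zero : entI 0 = -Real.log 2 := by
  simp [entI, ← two_mul, Real.log_inv]

lemma continuous_entI : Continuous entI := by
  unfold entI
  have hmul := Real.continuous_mul_log
  fun_prop

lemma hasDerivAt_entI {x : ℝ} (hx : x ∈ Set.Ioo (-1 : ℝ) 1) :
    HasDerivAt entI (arctanh x) x := by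
  obtain ⟨hl, hr⟩ := hx
  have hp : HasDerivAt (fun y : ℝ => (1 + y) / 2) (1 / 2) x := by
    simpa using ((hasDerivAt_id x).const_add 1).div_const 2
  have hm : HasDerivAt (fun y : ℝ => (1 - y) / 2) (-1 / 2) x := by
    simpa using ((hasDerivAt_id x).const_sub 1).div_const 2
  refine (((Real.hasDerivAt_mul_log (by linarith)).comp x hp).add
    ((Real.hasDerivAt_mul_log (by linarith)).comp x hm)).congr_deriv ?_
  have hp0 : 1 + x ≠ 0 := by linarith
  have hm0 : 1 - x ≠ 0 := by linarith
  rw [arctanh, Real.log_div hp0 hm0, Real.log_div hp0 two_ne_zero, Real.log_div hm0 two_ne_zero]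
  ring

lemma lt_arctanh {x : ℝ} (h0 : 0 < x) (h1 : x < 1) : x < arctanh x := by
  have hsum := Real.hasSum_log_sub_log_of_abs_lt_one (abs_lt.2 ⟨by linarith, h1⟩)
  have hpartial := sum_le_hasSum (Finset.range 2) (fun k _ => by positivity) hsum
  simp only [Finset.sum_range_succ, Finset.sum_range_zero] at hpartial
  rw [arctanh, Real.log_div (by linarith) (by linarith)]
  nlinarith [pow_pos h0 3]

lemma sq_div_two_lt_entI_add_log_two_of_pos {x : ℝ} (h0 : 0 < x) (h1 : x ≤ 1) :
    x ^ 2 / 2 < entI x + Real.log 2 := by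
  set F : ℝ → ℝ := fun y => entI y + Real.log 2 - y ^ 2 / 2
  have hmono : StrictMonoOn F (Set.Icc 0 1) := by
    refine strictMonoOn_of_deriv_pos (convex_Icc 0 1)
      (by have := continuous_entI; fun_prop) fun y hy => ?_
    rw [interior_Icc] at hy
    have hd : HasDerivAt F (arctanh y - y) y := by
      refine (((hasDerivAt_entI ⟨by linarith [hy.1], hy.2⟩).add_const (Real.log 2)).sub
        ((hasDerivAt_pow 2 y).div_const 2)).congr_deriv ?_
      ring
    rw [hd.deriv]
    linarith [lt_arctanh hy.1 hy.2]
  have := hmono ⟨le_rfl, zero_le_one⟩ ⟨h0.le, h1⟩ h0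
  simp only [F, entI_zero] at this
  linarith

lemma sq_div_two_lt_entI_add_log_two {x : ℝ} (hx : x ∈ Set.Icc (-1 : ℝ) 1) (h0 : x ≠ 0) :
    x ^ 2 / 2 < entI x + Real.log 2 := by
  rw [← sq_abs, ← entI_abs]
  exact sq_div_two_lt_entI_add_log_two_of_pos (abs_pos.2 h0) (abs_le.2 hx)

lemma sq_div_two_le_entI_add_log_two {x : ℝ} (hx : x ∈ Set.Icc (-1 : ℝ) 1) :
    x ^ 2 / 2 ≤ entI x + Real.log 2 := by
  rcases eq_or_ne x 0 with rfl | h0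
  · simp [entI_zero]
  · exact (sq_div_two_lt_entI_add_log_two hx h0).le

lemma sum_sq_div_two_lt_entI_add {m : ℝ × ℝ} (hm : m ∈ box) (h0 : m ≠ (0, 0)) :
    (m.1 ^ 2 + m.2 ^ 2) / 2 < entI m.1 + entI m.2 + 2 * Real.log 2 := by
  obtain ⟨h1, h2⟩ := hm
  rcases eq_or_ne m.1 0 with hx | hx
  · have hy : m.2 ≠ 0 := fun hy => h0 (Prod.ext hx hy)
    linarith [sq_div_two_le_entI_add_log_two h1, sq_div_two_lt_entI_add_log_two h2 hy]
  · linarith [sq_div_two_lt_entI_add_log_two h1 hx, sq_div_two_le_entI_add_log_two h2]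

lemma mul_Ebil_le {α β : ℝ} (hα : 0 ≤ α) (hβ : 0 ≤ β) (hαβ : β * (1 + α) ≤ 2) (m : ℝ × ℝ) :
    β * Ebil α m ≤ (m.1 ^ 2 + m.2 ^ 2) / 2 := by
  have hdiag : 0 ≤ (2 - β * (1 + α)) * (m.1 ^ 2 + m.2 ^ 2) :=
    mul_nonneg (by linarith) (by positivity)
  have hoff : 0 ≤ β * α * (m.1 - m.2) ^ 2 := by positivity
  -- `4 β E_α(m) = β (1 + α) (m₁² + m₂²) - β α (m₁ - m₂)²`
  simp only [Ebil]
  nlinarith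

lemma Gfun_zero (α β : ℝ) : Gfun α β (0, 0) = 2 * Real.log 2 := by
  simp only [Gfun, Ebil, entI_zero]
  ring

/-- for `α ∈ (0,1]` and `0 < β ≤ 2/(1+α)`, the origin is the unique maximizer
of `G_{α,β}` on `[−1,1]²`. -/
theorem G_unique_maximizer_subcritical
    (α β : ℝ) (hα : α ∈ Set.Ioc (0 : ℝ) 1) (hβpos : 0 < β) (hβ : β ≤ 2 / (1 + α)) :
    ∀ m ∈ box, m ≠ ((0 : ℝ), (0 : ℝ)) → Gfun α β m < Gfun α β (0, 0) := by
  intro m hm h0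
  have hαβ : β * (1 + α) ≤ 2 := (le_div_iff₀ (by linarith [hα.1])).1 hβ
  have hE := mul_Ebil_le hα.1.le hβpos.le hαβ m
  have hI := sum_sq_div_two_lt_entI_add hm h0
  rw [Gfun_zero, Gfun]
  linarith
end
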